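/- arXiv:1502.07648 — 4 statements merged into one kernel-verified Lean document; each statement's English description precedes it below -/
import Mathlib

section
/- Let φ : (0,∞)^{k−1} → (0,∞)^{k−1} be the map φ(x) = (x₁², …, x_{k−1}²), let T ⊆ (0,∞)^{k−1} be convex, and let S = φ^{−1}(T). Then S is √(k−1)-quasiconvex: for any x⁰, x¹ ∈ S, the path t ↦ φ^{−1}(φ(x⁰) + t(φ(x¹) − φ(x⁰))), t ∈ [0,1], lies in S and has length at most √(k−1)·‖x¹ − x⁰‖. -/
/-!
Along the path, `φ (γ t)` runs along the segment from `φ x₀` to `φ x₁`, so it stays in `T` by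
convexity. Each coordinate of `γ` is the square root of an affine function of `t`, hence monotone,
so its variation on `[0, 1]` is `|x₁ i - x₀ i|`. As `‖·‖₂ ≤ ‖·‖₁`, the variation of `γ` is at most
`‖x₁ - x₀‖₁ ≤ √m ‖x₁ - x₀‖₂` (Cauchy–Schwarz).
-/

open Set

theorem eVariationOn.neg {α E : Type*} [LinearOrder α] [SeminormedAddCommGroup E]
    (f : α → E) (s : Set α) : eVariationOn (-f) s = eVariationOn f s := by
  simp only [eVariationOn, Pi.neg_apply, edist_neg_neg]

theorem AntitoneOn.eVariationOn_eq {α : Type*} [LinearOrder α] {f : α → ℝ} {s : Set α} {a b : α}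
    (hf : AntitoneOn f s) (as : a ∈ s) (bs : b ∈ s) :
    eVariationOn f (s ∩ Icc a b) = .ofReal (f a - f b) := by
  have h := hf.neg.eVariationOn_eq as bs
  rwa [show (fun x => -f x) = -f from rfl, eVariationOn.neg, neg_sub_neg] at h

theorem eVariationOn_sqrt_affine (a b : ℝ) :
    eVariationOn (fun t => √(a + t * (b - a))) (Icc 0 1) = .ofReal |√b - √a| := by
  set f := fun t : ℝ => √(a + t * (b - a))
  have hf0 : f 0 = √a := by simp [f]
  have hf1 : f 1 = √b := by simp [f]
  rw [← univ_inter (Icc 0 1)]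
  rcases le_total a b with hab | hba
  · have hf : Monotone f := fun s t hst => Real.sqrt_le_sqrt (by nlinarith)
    rw [(hf.monotoneOn univ).eVariationOn_eq trivial trivial, hf0, hf1,
      abs_of_nonneg (sub_nonneg.2 (Real.sqrt_le_sqrt hab))]
  · have hf : Antitone f := fun s t hst => Real.sqrt_le_sqrt (by nlinarith)
    rw [(hf.antitoneOn univ).eVariationOn_eq trivial trivial, hf0, hf1,
      abs_of_nonpos (sub_nonpos.2 (Real.sqrt_le_sqrt hba)), neg_sub]

theorem EuclideanSpace.norm_le_sum_abs {ι : Type*} [Fintype ι] (y : EuclideanSpace ℝ ι) :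
    ‖y‖ ≤ ∑ i, |y i| := by
  rw [EuclideanSpace.norm_eq]
  calc √(∑ i, ‖y i‖ ^ 2) ≤ √((∑ i, ‖y i‖) ^ 2) :=
        Real.sqrt_le_sqrt (Finset.sum_sq_le_sq_sum_of_nonneg fun i _ => norm_nonneg _)
    _ = ∑ i, |y i| := Real.sqrt_sq (Finset.sum_nonneg fun i _ => norm_nonneg _)

theorem EuclideanSpace.sum_abs_le_sqrt_card_mul_norm {ι : Type*} [Fintype ι]
    (y : EuclideanSpace ℝ ι) : ∑ i, |y i| ≤ √(Fintype.card ι) * ‖y‖ := by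
  rw [EuclideanSpace.norm_eq, ← Real.sqrt_mul (Nat.cast_nonneg _)]
  refine Real.le_sqrt_of_sq_le ?_
  simpa using sq_sum_le_card_mul_sum_sq (s := Finset.univ) (f := fun i => |y i|)

theorem EuclideanSpace.edist_le_sum_edist_apply {ι : Type*} [Fintype ι]
    (x y : EuclideanSpace ℝ ι) : edist x y ≤ ∑ i, edist (x i) (y i) := by
  simp only [edist_dist, dist_eq_norm, Real.norm_eq_abs]
  rw [← ENNReal.ofReal_sum_of_nonneg fun i _ => abs_nonneg _]
  exact ENNReal.ofReal_le_ofReal (by simpa using (x - y).norm_le_sum_abs)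

theorem eVariationOn_le_sum_eVariationOn_apply {α ι : Type*} [LinearOrder α] [Fintype ι]
    (f : α → EuclideanSpace ℝ ι) (s : Set α) :
    eVariationOn f s ≤ ∑ i, eVariationOn (fun t => f t i) s := by
  refine iSup_le fun ⟨n, u, hu, us⟩ => ?_
  calc ∑ j ∈ Finset.range n, edist (f (u (j + 1))) (f (u j))
      ≤ ∑ j ∈ Finset.range n, ∑ i, edist (f (u (j + 1)) i) (f (u j) i) :=
        Finset.sum_le_sum fun j _ => EuclideanSpace.edist_le_sum_edist_apply _ _
    _ = ∑ i, ∑ j ∈ Finset.range n, edist (f (u (j + 1)) i) (f (u j) i) := Finset.sum_comm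
    _ ≤ ∑ i, eVariationOn (fun t => f t i) s :=
        Finset.sum_le_sum fun i _ => eVariationOn.sum_le hu us

theorem quasiconvex_of_sq_preimage_convex_general (m : ℕ)
    (φ : EuclideanSpace ℝ (Fin m) → EuclideanSpace ℝ (Fin m))
    (hφ : ∀ x i, φ x i = (x i) ^ 2)
    (T : Set (EuclideanSpace ℝ (Fin m))) (hT : Convex ℝ T)
    (S : Set (EuclideanSpace ℝ (Fin m)))
    (hS : S = {x | (∀ i, 0 < x i) ∧ φ x ∈ T})
    (x₀ : EuclideanSpace ℝ (Fin m)) (hx₀ : x₀ ∈ S)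
    (x₁ : EuclideanSpace ℝ (Fin m)) (hx₁ : x₁ ∈ S)
    (γ : ℝ → EuclideanSpace ℝ (Fin m))
    (hγ : ∀ t i, γ t i = Real.sqrt (φ x₀ i + t * (φ x₁ i - φ x₀ i))) :
    (∀ t ∈ Icc (0:ℝ) 1, γ t ∈ S) ∧
      eVariationOn γ (Icc 0 1) ≤ ENNReal.ofReal (Real.sqrt m * ‖x₁ - x₀‖) := by
  subst hS
  obtain ⟨h₀pos, h₀T⟩ := hx₀
  obtain ⟨h₁pos, h₁T⟩ := hx₁
  refine ⟨fun t ht => ?_, ?_⟩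
  · set c := (1 - t) • φ x₀ + t • φ x₁
    have hγc : ∀ i, γ t i = √(c i) := fun i => by
      rw [hγ]; congr 1; simp only [c, PiLp.add_apply, PiLp.smul_apply, smul_eq_mul]; ring
    have hcpos : ∀ i, 0 < c i := fun i => by
      simpa [c] using convex_Ioi (0 : ℝ) (hφ x₀ i ▸ pow_pos (h₀pos i) 2)
        (hφ x₁ i ▸ pow_pos (h₁pos i) 2) (sub_nonneg.2 ht.2) ht.1 (sub_add_cancel 1 t)
    refine ⟨fun i => hγc i ▸ Real.sqrt_pos.2 (hcpos i), ?_⟩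
    convert hT h₀T h₁T (sub_nonneg.2 ht.2) ht.1 (sub_add_cancel 1 t)
    ext i
    rw [hφ, hγc, Real.sq_sqrt (hcpos i).le]
  · calc eVariationOn γ (Icc 0 1) ≤ ∑ i, eVariationOn (fun t => γ t i) (Icc 0 1) :=
          eVariationOn_le_sum_eVariationOn_apply γ _
      _ = ∑ i, ENNReal.ofReal |(x₁ - x₀) i| := by
          refine Finset.sum_congr rfl fun i _ => ?_
          simp_rw [hγ, hφ]
          rw [eVariationOn_sqrt_affine, Real.sqrt_sq (h₀pos i).le, Real.sqrt_sq (h₁pos i).le,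
            PiLp.sub_apply]
      _ = ENNReal.ofReal (∑ i, |(x₁ - x₀) i|) :=
          (ENNReal.ofReal_sum_of_nonneg fun i _ => abs_nonneg _).symm
      _ ≤ ENNReal.ofReal (√m * ‖x₁ - x₀‖) := ENNReal.ofReal_le_ofReal (by
          simpa using (x₁ - x₀).sum_abs_le_sqrt_card_mul_norm)

/-- Preimages of convex sets in the positive orthant under the coordinatewise
squaring map `φ(x) = (x₁², …, x_{k−1}²)` are `√(k−1)`-quasiconvex: the path
`t ↦ φ⁻¹(φ(x⁰) + t(φ(x¹) − φ(x⁰)))` stays in `S` and has length at most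
`√(k−1) ‖x¹ − x⁰‖`. -/
theorem quasiconvex_of_sq_preimage_convex (m : ℕ)
    (φ : EuclideanSpace ℝ (Fin m) → EuclideanSpace ℝ (Fin m))
    (hφ : ∀ x i, φ x i = (x i) ^ 2)
    (T : Set (EuclideanSpace ℝ (Fin m))) (hT : Convex ℝ T)
    (hTpos : ∀ y ∈ T, ∀ i, 0 < y i)
    (S : Set (EuclideanSpace ℝ (Fin m)))
    (hS : S = {x | (∀ i, 0 < x i) ∧ φ x ∈ T})
    (x₀ : EuclideanSpace ℝ (Fin m)) (hx₀ : x₀ ∈ S)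
    (x₁ : EuclideanSpace ℝ (Fin m)) (hx₁ : x₁ ∈ S)
    (γ : ℝ → EuclideanSpace ℝ (Fin m))
    (hγ : ∀ t i, γ t i = Real.sqrt (φ x₀ i + t * (φ x₁ i - φ x₀ i))) :
    (∀ t ∈ Icc (0:ℝ) 1, γ t ∈ S) ∧
      eVariationOn γ (Icc 0 1) ≤ ENNReal.ofReal (Real.sqrt m * ‖x₁ - x₀‖) :=
  quasiconvex_of_sq_preimage_convex_general m φ hφ T hT S hS x₀ hx₀ x₁ hx₁ γ hγ
end

section
/- With f and S as above (f(x) = sqrt(b/c_k − Σ_{i<k} (c_i/c_k) x_i²) on S = {x ∈ (0,∞)^{k−1} : c_i² x_i² ≤ c_k² f(x)² for all i < k}), the second partial derivatives satisfy |∂²f/∂x_i∂x_j (x)| ≤ 2 / min(x₁, …, x_{k−1}, f(x)) for all x ∈ S. -/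
/-!
On the open set where the radicand `q = β - ∑ₖ aₖ yₖ²` is positive, the graph `g = √q` has
`∂ᵢg = -aᵢyᵢ / g`, hence `∂ⱼ∂ᵢg = -(aᵢxᵢ · aⱼxⱼ / g³ + δᵢⱼ aᵢ / g)`. With `aₖ = cₖ / c_k`, the
constraint defining `S` says `|aₖxₖ| ≤ g(x)`, so the first term is at most `1 / g(x)` and the
second at most `1 / xᵢ`; both are at most `1 / min(minₖ xₖ, g(x))`.
-/

lemma abs_mul_div_pow_three_le {u v s : ℝ} (hs : 0 < s) (hu : |u| ≤ s) (hv : |v| ≤ s) :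
    |u * v / s ^ 3| ≤ 1 / s := by
  rw [abs_div, abs_mul, abs_of_pos (pow_pos hs 3), div_le_div_iff₀ (pow_pos hs 3) hs]
  nlinarith [mul_le_mul hu hv (abs_nonneg v) hs.le]

lemma abs_div_le_one_div_of_abs_mul_le {c x s : ℝ} (hs : 0 < s) (hx : 0 < x) (h : |c * x| ≤ s) :
    |c / s| ≤ 1 / x := by
  rw [abs_div, abs_of_pos hs, div_le_div_iff₀ hs hx, one_mul]
  rwa [abs_mul, abs_of_pos hx] at h

lemma abs_div_mul_le_of_sq_mul_sq_le {c d x s : ℝ} (hs : 0 ≤ s)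
    (h : c ^ 2 * x ^ 2 ≤ d ^ 2 * s ^ 2) : |c / d * x| ≤ s := by
  refine abs_le_of_sq_le_sq ?_ hs
  rw [div_mul_eq_mul_div, div_pow, mul_pow]
  exact div_le_of_le_mul₀ (sq_nonneg d) (sq_nonneg s) (by linarith)

noncomputable section

namespace QuadricGraph

variable {ι : Type*} [Fintype ι] (a : ι → ℝ) (β : ℝ)

def radicand (y : EuclideanSpace ℝ ι) : ℝ := β - ∑ k, a k * y k ^ 2

def graph (y : EuclideanSpace ℝ ι) : ℝ := √(radicand a β y)

def radicandDeriv (y : EuclideanSpace ℝ ι) : EuclideanSpace ℝ ι →L[ℝ] ℝ :=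
  -∑ k, (2 * a k * y k) • EuclideanSpace.proj k

variable {a β}

@[simp]
lemma radicandDeriv_single [DecidableEq ι] (y : EuclideanSpace ℝ ι) (j : ι) :
    radicandDeriv a y (EuclideanSpace.single j 1) = -(2 * a j * y j) := by
  simp [radicandDeriv]

lemma hasFDerivAt_radicand (y : EuclideanSpace ℝ ι) :
    HasFDerivAt (radicand a β) (radicandDeriv a y) y := by
  have hterm (k : ι) : HasFDerivAt (fun z : EuclideanSpace ℝ ι => a k * z k ^ 2)
      ((2 * a k * y k) • (EuclideanSpace.proj k : EuclideanSpace ℝ ι →L[ℝ] ℝ)) y := by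
    refine (((EuclideanSpace.proj k : EuclideanSpace ℝ ι →L[ℝ] ℝ).hasFDerivAt.pow 2).const_mul
      (a k)).congr_fderiv ?_
    ext v
    simp
    ring
  exact (HasFDerivAt.fun_sum fun k _ => hterm k).const_sub β |>.congr_fderiv
    (by simp [radicandDeriv])

lemma continuous_radicand : Continuous (radicand a β) :=
  continuous_iff_continuousAt.2 fun y => (hasFDerivAt_radicand y).continuousAt

lemma hasFDerivAt_graph {y : EuclideanSpace ℝ ι} (hy : 0 < radicand a β y) :
    HasFDerivAt (graph a β) ((2 * graph a β y)⁻¹ • radicandDeriv a y) y :=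
  ((hasFDerivAt_radicand y).sqrt hy.ne').congr_fderiv (by rw [one_div]; rfl)

lemma fderiv_graph_single [DecidableEq ι] {y : EuclideanSpace ℝ ι}
    (hy : 0 < radicand a β y) (i : ι) :
    fderiv ℝ (graph a β) y (EuclideanSpace.single i 1) = -(a i * y i) / graph a β y := by
  have hg : graph a β y ≠ 0 := (Real.sqrt_pos.2 hy).ne'
  rw [(hasFDerivAt_graph hy).fderiv]
  simp
  field_simp

lemma partialDeriv_graph_eventuallyEq [DecidableEq ι] {x : EuclideanSpace ℝ ι}
    (hx : 0 < radicand a β x) (i : ι) :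
    (fun y => fderiv ℝ (graph a β) y (EuclideanSpace.single i 1)) =ᶠ[nhds x]
      fun y => -(a i * y i) / graph a β y := by
  filter_upwards [(isOpen_lt continuous_const continuous_radicand).mem_nhds hx] with y hy
  exact fderiv_graph_single hy i

lemma fderiv_partialDeriv_graph_single [DecidableEq ι] {x : EuclideanSpace ℝ ι}
    (hx : 0 < radicand a β x) (i j : ι) :
    fderiv ℝ (fun y => fderiv ℝ (graph a β) y (EuclideanSpace.single i 1)) x
        (EuclideanSpace.single j 1) =
      -(a i * x i * (a j * x j) / graph a β x ^ 3 +
        if i = j then a i / graph a β x else 0) := by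
  have hs : graph a β x ≠ 0 := (Real.sqrt_pos.2 hx).ne'
  have hinv : HasFDerivAt (fun y => (graph a β y)⁻¹) _ x :=
    (hasDerivAt_inv hs).comp_hasFDerivAt x (hasFDerivAt_graph hx)
  have hproj :=
    ((EuclideanSpace.proj i : EuclideanSpace ℝ ι →L[ℝ] ℝ).hasFDerivAt (x := x)).const_mul (-a i)
  have hpartial : HasFDerivAt (fun y => -(a i * y i) / graph a β y) _ x :=
    (hproj.fun_mul hinv).congr_of_eventuallyEq (.of_forall fun y => by simp [div_eq_mul_inv])
  rw [(partialDeriv_graph_eventuallyEq hx i).fderiv_eq, hpartial.fderiv]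
  rcases eq_or_ne i j with rfl | hij
  · simp
    ring
  · simp [hij]
    ring

end QuadricGraph

end

theorem quadric_graph_second_deriv_bound_general (m : ℕ) [NeZero m] (c : Fin m → ℝ) (ck b : ℝ)
    (f : EuclideanSpace ℝ (Fin m) → ℝ)
    (hf : ∀ x, f x = Real.sqrt (b / ck - ∑ i, (c i / ck) * (x i) ^ 2))
    (S : Set (EuclideanSpace ℝ (Fin m)))
    (hS : S = {x | (∀ i, 0 < x i) ∧
      ∀ i, (c i) ^ 2 * (x i) ^ 2 ≤ ck ^ 2 * (f x) ^ 2})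
    (hpos : ∀ x ∈ S, 0 < b / ck - ∑ i, (c i / ck) * (x i) ^ 2) :
    ∀ x ∈ S, ∀ i j,
      |fderiv ℝ (fun y => fderiv ℝ f y (EuclideanSpace.single i 1)) x
          (EuclideanSpace.single j 1)| ≤
        2 / min (Finset.univ.inf' Finset.univ_nonempty (fun i => x i)) (f x) := by
  intro x hx i j
  have hfg : f = QuadricGraph.graph (fun k => c k / ck) (b / ck) := funext hf
  obtain ⟨hxpos, hxc⟩ : _ ∧ _ := hS ▸ hx
  have hs : 0 < f x := hf x ▸ Real.sqrt_pos.2 (hpos x hx)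
  have hbound (k : Fin m) : |c k / ck * x k| ≤ f x := abs_div_mul_le_of_sq_mul_sq_le hs.le (hxc k)
  have hdiag : |if i = j then c i / ck / f x else 0| ≤ 1 / x i := by
    split_ifs
    · exact abs_div_le_one_div_of_abs_mul_le hs (hxpos i) (hbound i)
    · simpa using (hxpos i).le
  set M := min (Finset.univ.inf' Finset.univ_nonempty fun k => x k) (f x)
  have hMpos : 0 < M := lt_min ((Finset.lt_inf'_iff _).2 fun k _ => hxpos k) hs
  have hMx : M ≤ x i := (min_le_left _ _).trans (Finset.inf'_le _ (Finset.mem_univ i))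
  rw [hfg, QuadricGraph.fderiv_partialDeriv_graph_single (hpos x hx), ← hfg, abs_neg]
  calc _ ≤ 1 / f x + 1 / x i := (abs_add_le _ _).trans
        (add_le_add (abs_mul_div_pow_three_le hs (hbound i) (hbound j)) hdiag)
    _ ≤ 1 / M + 1 / M := add_le_add (one_div_le_one_div_of_le hMpos (min_le_right _ _))
        (one_div_le_one_div_of_le hMpos hMx)
    _ = 2 / M := by ring

/-- Second partial derivative bound for the graph function of a diagonal quadric.
With `f(x) = √(b/c_k − ∑ᵢ (cᵢ/c_k) xᵢ²)` on
`S = {x ∈ (0,∞)^{k−1} : cᵢ² xᵢ² ≤ c_k² f(x)² for all i}`, one has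
`|∂²f/∂xᵢ∂xⱼ (x)| ≤ 2 / min(x₁, …, x_{k−1}, f(x))` on `S`. -/
theorem quadric_graph_second_deriv_bound (m : ℕ) [NeZero m] (c : Fin m → ℝ) (ck b : ℝ)
    (hc : ∀ i, c i ≠ 0) (hck : ck ≠ 0)
    (f : EuclideanSpace ℝ (Fin m) → ℝ)
    (hf : ∀ x, f x = Real.sqrt (b / ck - ∑ i, (c i / ck) * (x i) ^ 2))
    (S : Set (EuclideanSpace ℝ (Fin m)))
    (hS : S = {x | (∀ i, 0 < x i) ∧
      ∀ i, (c i) ^ 2 * (x i) ^ 2 ≤ ck ^ 2 * (f x) ^ 2})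
    (hpos : ∀ x ∈ S, 0 < b / ck - ∑ i, (c i / ck) * (x i) ^ 2) :
    ∀ x ∈ S, ∀ i j,
      |fderiv ℝ (fun y => fderiv ℝ f y (EuclideanSpace.single i 1)) x
          (EuclideanSpace.single j 1)| ≤
        2 / min (Finset.univ.inf' Finset.univ_nonempty (fun i => x i)) (f x) :=
  quadric_graph_second_deriv_bound_general m c ck b f hf S hS hpos
end

section
/- Let Φ : U → ℝ^k be C², x ∈ U, and suppose ‖Φ'(y)^{−1}‖ ≤ c₀ and ‖Φ''(y)‖ ≤ c₁ for all y ∈ U. Let L : ℝ^k → ℝ be a linear functional of norm 1 and let v be the unit vector with Φ'(x)[v] = a·(grad of L) for some a > 0. Then (L∘Φ)'(x)[v] ≥ 1/c₀, and for all y ∈ B(x,ρ) ∩ U with ρ ≤ 1/(2 c₀ c₁), (L∘Φ)'(y)[v] ≥ 1/(2c₀). -/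
open Metric Set
open scoped RealInnerProductSpace

/-!
At `x` the inverse bound gives `1 = ‖v‖ ≤ c₀ ‖Φ'(x) v‖ = c₀ a`, and `L (Φ'(x) v) = a`. Moving to
`y ∈ B(x, ρ)`, the mean value inequality for `Φ'` bounds `‖Φ'(y) v - Φ'(x) v‖` by `c₁ ρ ≤ 1/(2c₀)`,
and `L` has norm one, so at most half of the lower bound `1/c₀` is lost.
-/

theorem ContinuousLinearEquiv.norm_le_norm_symm_mul_norm_apply {𝕜 E F : Type*}
    [NontriviallyNormedField 𝕜] [SeminormedAddCommGroup E] [NormedSpace 𝕜 E]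
    [SeminormedAddCommGroup F] [NormedSpace 𝕜 F] (e : E ≃L[𝕜] F) (x : E) :
    ‖x‖ ≤ ‖(e.symm : F →L[𝕜] E)‖ * ‖e x‖ := by
  simpa using (e.symm : F →L[𝕜] E).le_opNorm (e x)

theorem ContinuousLinearEquiv.one_div_le_of_apply_eq_smul {E F : Type*}
    [SeminormedAddCommGroup E] [NormedSpace ℝ E] [SeminormedAddCommGroup F] [NormedSpace ℝ F]
    (e : E ≃L[ℝ] F) {c a : ℝ} (hc : 0 < c) (he : ‖(e.symm : F →L[ℝ] E)‖ ≤ c) {v : E} {w : F}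
    (hv : ‖v‖ = 1) (hw : ‖w‖ = 1) (ha : 0 < a) (hev : e v = a • w) : 1 / c ≤ a := by
  have h := e.norm_le_norm_symm_mul_norm_apply v
  rw [hv, hev, norm_smul, hw, Real.norm_of_nonneg ha.le, mul_one] at h
  rw [div_le_iff₀ hc]
  nlinarith

theorem ContDiffOn.differentiableOn_of_hasFDerivAt {𝕜 E F : Type*} [NontriviallyNormedField 𝕜]
    [NormedAddCommGroup E] [NormedSpace 𝕜 E] [NormedAddCommGroup F] [NormedSpace 𝕜 F]
    {Φ : E → F} {D : E → E →L[𝕜] F} {U : Set E} (hΦ : ContDiffOn 𝕜 2 Φ U) (hU : IsOpen U)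
    (hD : ∀ y ∈ U, HasFDerivAt Φ (D y) y) : DifferentiableOn 𝕜 D U :=
  ((hΦ.fderiv_of_isOpen hU (m := 1) (by norm_num)).differentiableOn one_ne_zero).congr
    fun y hy => (hD y hy).fderiv.symm

theorem real_inner_le_real_inner_add_norm_sub_mul_norm {F : Type*} [SeminormedAddCommGroup F]
    [InnerProductSpace ℝ F] (u₀ u w : F) : ⟪u₀, w⟫ ≤ ⟪u, w⟫ + ‖u₀ - u‖ * ‖w‖ := by
  have := real_inner_le_norm (u₀ - u) w
  rw [inner_sub_left] at this
  linarith

theorem norm_apply_sub_apply_le_of_norm_fderiv_le {E F : Type*} [NormedAddCommGroup E]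
    [NormedSpace ℝ E] [NormedAddCommGroup F] [NormedSpace ℝ F] {T : E → E →L[ℝ] F} {x y : E}
    {ρ C : ℝ} (hT : ∀ z ∈ closedBall x ρ, DifferentiableAt ℝ T z)
    (hT' : ∀ z ∈ closedBall x ρ, ‖fderiv ℝ T z‖ ≤ C) (hy : y ∈ closedBall x ρ) (v : E) :
    ‖T y v - T x v‖ ≤ C * ρ * ‖v‖ := by
  have hx : x ∈ closedBall x ρ := mem_closedBall_self (nonempty_closedBall.mp ⟨y, hy⟩)
  have hC : 0 ≤ C := (norm_nonneg (fderiv ℝ T x)).trans (hT' x hx)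
  calc ‖T y v - T x v‖ = ‖(T y - T x) v‖ := rfl
    _ ≤ ‖T y - T x‖ * ‖v‖ := (T y - T x).le_opNorm v
    _ ≤ C * ‖y - x‖ * ‖v‖ := by
      gcongr
      exact (convex_closedBall x ρ).norm_image_sub_le_of_norm_fderiv_le hT hT' hx hy
    _ ≤ C * ρ * ‖v‖ := by gcongr; exact mem_closedBall_iff_norm.mp hy

/-- Directional lower bound for a composed functional: if `‖Φ'(y)⁻¹‖ ≤ c₀` and
`‖Φ''(y)‖ ≤ c₁` on `U`, `L = ⟪·, w⟫` with `‖w‖ = 1`, and `v` is the unit vector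
with `Φ'(x)[v] = a w`, `a > 0`, then `(L∘Φ)'(x)[v] ≥ 1/c₀`, and
`(L∘Φ)'(y)[v] ≥ 1/(2c₀)` for all `y ∈ B(x,ρ) ∩ U` whenever `ρ ≤ 1/(2c₀c₁)`. -/
theorem composed_functional_lower_bound (k : ℕ) (c₀ c₁ : ℝ) (hc₀ : 0 < c₀) (hc₁ : 0 < c₁)
    (U : Set (EuclideanSpace ℝ (Fin k))) (hU : IsOpen U)
    (Φ : EuclideanSpace ℝ (Fin k) → EuclideanSpace ℝ (Fin k))
    (hC2 : ContDiffOn ℝ 2 Φ U)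
    (D : EuclideanSpace ℝ (Fin k) → (EuclideanSpace ℝ (Fin k) ≃L[ℝ] EuclideanSpace ℝ (Fin k)))
    (hD : ∀ y ∈ U, HasFDerivAt Φ
      ((D y : EuclideanSpace ℝ (Fin k) →L[ℝ] EuclideanSpace ℝ (Fin k))) y)
    (hDinv : ∀ y ∈ U, ‖((D y).symm :
      EuclideanSpace ℝ (Fin k) →L[ℝ] EuclideanSpace ℝ (Fin k))‖ ≤ c₀)
    (hD' : ∀ y ∈ U, ‖fderiv ℝ
      (fun z => ((D z : EuclideanSpace ℝ (Fin k) →L[ℝ] EuclideanSpace ℝ (Fin k)))) y‖ ≤ c₁)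
    (x : EuclideanSpace ℝ (Fin k)) (hx : x ∈ U)
    (L : EuclideanSpace ℝ (Fin k) →L[ℝ] ℝ) (w : EuclideanSpace ℝ (Fin k))
    (hw : ‖w‖ = 1) (hL : ∀ y, L y = ⟪y, w⟫)
    (v : EuclideanSpace ℝ (Fin k)) (hv : ‖v‖ = 1) (a : ℝ) (ha : 0 < a)
    (hav : (D x) v = a • w) :
    1 / c₀ ≤ L ((D x) v) ∧
      ∀ ρ : ℝ, 0 < ρ → ρ ≤ 1 / (2 * c₀ * c₁) → closedBall x ρ ⊆ U →
        ∀ y ∈ closedBall x ρ, 1 / (2 * c₀) ≤ L ((D y) v) := by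
  have hLx : L ((D x) v) = a := by
    rw [hL, hav, real_inner_smul_left, real_inner_self_eq_norm_sq, hw]
    ring
  have ha₀ : 1 / c₀ ≤ a := (D x).one_div_le_of_apply_eq_smul hc₀ (hDinv x hx) hv hw ha hav
  refine ⟨hLx ▸ ha₀, fun ρ hρ hρc hball y hy => ?_⟩
  have hDy : ‖(D y) v - (D x) v‖ ≤ c₁ * ρ := by
    have hDdiff := hC2.differentiableOn_of_hasFDerivAt hU hD
    simpa [hv] using norm_apply_sub_apply_le_of_norm_fderiv_le
      (fun z hz => hDdiff.differentiableAt (hU.mem_nhds (hball hz)))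
      (fun z hz => hD' z (hball hz)) hy v
  have hc₁ρ : c₁ * ρ ≤ 1 / (2 * c₀) :=
    calc c₁ * ρ ≤ c₁ * (1 / (2 * c₀ * c₁)) := by gcongr
      _ = 1 / (2 * c₀) := by field_simp
  calc 1 / (2 * c₀) = 1 / c₀ - 1 / (2 * c₀) := by field_simp; ring
    _ ≤ ⟪(D x) v, w⟫ - ‖(D x) v - (D y) v‖ * ‖w‖ := by
      rw [← hL, hLx, hw, mul_one, norm_sub_rev]
      linarith
    _ ≤ L ((D y) v) := by
      rw [hL]
      linarith [real_inner_le_real_inner_add_norm_sub_mul_norm ((D x) v) ((D y) v) w]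
end

section
/- Let Z ⊆ ℝ^d be the zero set of a quadratic polynomial P with integer coefficients, K ⊆ Z_reg a compact subset of the smooth locus, U ⊆ ℝ^{d−1} open, Ψ : U → Z a local parameterization with Ψ(V) ⊇ K for compact V ⊆ U. Then there exists κ > 0 such that for every ball B = B(x,ρ) ⊆ ℝ^d, the set of rational points p/q ∈ ℚ^d ∩ K ∩ B with denominator q ≤ κ/ρ is contained in a single affine hyperplane of ℝ^d. -/
open Metric Set Finset
open scoped RealInnerProductSpace

section Aux

lemma aux_coord_le_norm {n : ℕ} (v : EuclideanSpace ℝ (Fin n)) (i : Fin n) : |v i| ≤ ‖v‖ := by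
  rw [EuclideanSpace.norm_eq]
  rw [show |v i| = Real.sqrt (|v i|^2) by rw [Real.sqrt_sq_eq_abs, abs_abs]]
  apply Real.sqrt_le_sqrt
  rw [sq_abs]
  exact Finset.single_le_sum (f := fun j => ‖v j‖^2) (fun j _ => by positivity)
    (Finset.mem_univ i) |>.trans_eq' (by rw [Real.norm_eq_abs, sq_abs])

/-- Rank-one multilinear expansion of the determinant. -/
lemma aux_det_rank_one_expand {n : ℕ} (a : Fin n → Fin n → ℝ) (c : Fin n → ℝ)
    (b : Fin n → ℝ) :
    Matrix.det (Matrix.of fun i => a i + c i • b)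
      = Matrix.det (Matrix.of a) + ∑ i, c i * Matrix.det ((Matrix.of a).updateRow i b) := by
  classical
  set f := Matrix.detRowAlternating (R := ℝ) (n := Fin n) with hf
  have key : f (a + fun i => c i • b) = ∑ s : Finset (Fin n), f (s.piecewise a fun i => c i • b) :=
    f.map_add_univ a _
  have h1 : Matrix.det (Matrix.of fun i => a i + c i • b) = f (a + fun i => c i • b) := rfl
  rw [h1, key]
  set T : Finset (Finset (Fin n)) :=
    insert Finset.univ (Finset.image (fun i => Finset.univ.erase i) Finset.univ) with hT
  have hzero : ∀ s ∈ (Finset.univ : Finset (Finset (Fin n))), s ∉ T →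
      f (s.piecewise a fun i => c i • b) = 0 := by
    intro s _ hs
    simp only [hT, Finset.mem_insert, Finset.mem_image, Finset.mem_univ, true_and, not_or,
      not_exists] at hs
    obtain ⟨hs1, hs2⟩ := hs
    have h2 : ∃ i j, i ≠ j ∧ i ∉ s ∧ j ∉ s := by
      obtain ⟨i, hi⟩ : ∃ i, i ∉ s := by
        by_contra h; push_neg at h
        exact hs1 (Finset.eq_univ_iff_forall.mpr h)
      obtain ⟨j, hj, hji⟩ : ∃ j, j ∉ s ∧ j ≠ i := by
        by_contra h; push_neg at h
        apply hs2 i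
        ext k
        simp only [Finset.mem_erase, Finset.mem_univ, and_true]
        constructor
        · intro hki
          by_contra hks
          exact hki (h k hks)
        · intro hks
          intro hki
          exact hi (hki ▸ hks)
      exact ⟨i, j, hji.symm, hi, hj⟩
    obtain ⟨i, j, hij, hi, hj⟩ := h2
    set m := s.piecewise a fun i => c i • b with hm
    have hmi : m i = c i • b := Finset.piecewise_eq_of_notMem _ _ _ hi
    have hmj : m j = c j • b := Finset.piecewise_eq_of_notMem _ _ _ hj
    have e1 : f m = c i * f (Function.update m i b) := by
      conv_lhs => rw [← Function.update_eq_self i m, hmi]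
      exact f.map_update_smul m i (c i) b
    have e2 : f (Function.update m i b) = c j * f (Function.update (Function.update m i b) j b) := by
      conv_lhs => rw [← Function.update_eq_self j (Function.update m i b),
        Function.update_of_ne hij.symm, hmj]
      exact (f.map_update_smul (Function.update m i b) j (c j) b)
    have e3 : f (Function.update (Function.update m i b) j b) = 0 := by
      apply f.map_eq_zero_of_eq _ _ hij
      simp [Function.update_self, Function.update_of_ne hij]
    rw [e1, e2, e3, mul_zero, mul_zero]
  rw [← Finset.sum_subset (Finset.subset_univ T) hzero]
  have huniv : Finset.univ ∉ Finset.image (fun i => Finset.univ.erase i) (Finset.univ : Finset (Fin n)) := by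
    simp only [Finset.mem_image, Finset.mem_univ, true_and, not_exists]
    intro i h
    have h2 := Finset.erase_ssubset (Finset.mem_univ i)
    rw [h] at h2
    exact ssubset_irrefl _ h2
  rw [hT, Finset.sum_insert huniv]
  congr 1
  · rw [Finset.piecewise_univ]; rfl
  · rw [Finset.sum_image (by
      intro i _ j _ h
      by_contra hne
      have : j ∈ Finset.univ.erase i := by simp [Ne.symm hne]
      rw [show Finset.univ.erase i = Finset.univ.erase j from h] at this
      exact (Finset.notMem_erase j _) this)]
    apply Finset.sum_congr rfl
    intro i _
    have hpw : (Finset.univ.erase i).piecewise a (fun k => c k • b) = Function.update a i (c i • b) := by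
      ext k j
      rcases eq_or_ne k i with rfl | hk
      · rw [Finset.piecewise_eq_of_notMem _ _ _ (Finset.notMem_erase k _), Function.update_self]
      · rw [Finset.piecewise_eq_of_mem _ _ _ (by simp [hk]), Function.update_of_ne hk]
    rw [hpw]
    have : f (Function.update a i (c i • b)) = c i * f (Function.update a i b) :=
      f.map_update_smul a i (c i) b
    rw [this]
    rfl

/-- Crude Hadamard-type bound for determinants. -/
lemma aux_abs_det_le {n : ℕ} (M : Matrix (Fin n) (Fin n) ℝ) (c : Fin n → ℝ)
    (h : ∀ i j, |M i j| ≤ c i) : |M.det| ≤ (n.factorial : ℝ) * ∏ i, c i := by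
  have hc : ∀ i, 0 ≤ c i := fun i => (abs_nonneg _).trans (h i i)
  rw [Matrix.det_apply']
  calc |∑ σ : Equiv.Perm (Fin n), Equiv.Perm.sign σ * ∏ i, M (σ i) i|
      ≤ ∑ σ : Equiv.Perm (Fin n), |(Equiv.Perm.sign σ : ℝ) * ∏ i, M (σ i) i| :=
        Finset.abs_sum_le_sum_abs _ _
    _ ≤ ∑ _σ : Equiv.Perm (Fin n), ∏ i, c i := by
        apply Finset.sum_le_sum
        intro σ _
        rw [abs_mul]
        have hsign : |(Equiv.Perm.sign σ : ℝ)| = 1 := by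
          rcases Int.units_eq_one_or (Equiv.Perm.sign σ) with h1 | h1 <;> simp [h1]
        rw [hsign, one_mul, abs_prod]
        calc ∏ i, |M (σ i) i| ≤ ∏ i, c (σ i) :=
              Finset.prod_le_prod (fun i _ => abs_nonneg _) (fun i _ => h (σ i) i)
          _ = ∏ i, c i := Equiv.prod_comp σ c
    _ = (n.factorial : ℝ) * ∏ i, c i := by
        rw [Finset.sum_const, Finset.card_univ, Fintype.card_perm, Fintype.card_fin,
          nsmul_eq_mul]

/-- Exact first-order Taylor expansion of an integral quadratic polynomial. -/
lemma aux_taylor_quad {d : ℕ} (A : Fin d → Fin d → ℤ) (B : Fin d → ℤ) (c : ℤ)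
    (P : EuclideanSpace ℝ (Fin d) → ℝ)
    (hP : ∀ x, P x = ∑ i, ∑ j, (A i j : ℝ) * x i * x j + ∑ i, (B i : ℝ) * x i + (c : ℝ))
    (r s : EuclideanSpace ℝ (Fin d)) :
    P s = P r + (∑ j, ((∑ i, ((A i j : ℝ) + (A j i : ℝ)) * r i) + (B j : ℝ)) * (s j - r j))
        + ∑ i, ∑ j, (A i j : ℝ) * (s i - r i) * (s j - r j) := by
  simp only [hP]
  have e1 : ∑ i, ∑ j, (A i j : ℝ) * s i * s j
      = ∑ i, ∑ j, ((A i j:ℝ) * r i * r j) + (∑ i, ∑ j, (A i j:ℝ) * r i * (s j - r j)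
        + (∑ i, ∑ j, (A i j:ℝ) * r j * (s i - r i)
        + ∑ i, ∑ j, (A i j:ℝ) * (s i - r i) * (s j - r j))) := by
    simp only [← Finset.sum_add_distrib]
    exact Finset.sum_congr rfl fun i _ => Finset.sum_congr rfl fun j _ => by ring
  have e2 : ∑ j, ((∑ i, ((A i j : ℝ) + (A j i : ℝ)) * r i) + (B j : ℝ)) * (s j - r j)
      = (∑ j, ∑ i, (A i j:ℝ) * r i * (s j - r j) + ∑ j, ∑ i, (A j i:ℝ) * r i * (s j - r j))
        + ∑ j, (B j : ℝ) * (s j - r j) := by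
    simp only [← Finset.sum_add_distrib]
    refine Finset.sum_congr rfl fun j _ => ?_
    rw [add_mul, Finset.sum_mul]
    congr 1
    exact Finset.sum_congr rfl fun i _ => by ring
  have e3 : ∑ i, (B i : ℝ) * s i = ∑ i, (B i:ℝ) * r i + ∑ i, (B i:ℝ) * (s i - r i) := by
    simp only [← Finset.sum_add_distrib]
    exact Finset.sum_congr rfl fun i _ => by ring
  have c1 : ∑ i, ∑ j, (A i j:ℝ) * r i * (s j - r j) = ∑ j, ∑ i, (A i j:ℝ) * r i * (s j - r j) :=
    Finset.sum_comm
  have c2 : ∑ i, ∑ j, (A i j:ℝ) * r j * (s i - r i) = ∑ j, ∑ i, (A j i:ℝ) * r i * (s j - r j) :=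
    rfl
  rw [e1, e2, e3, c1, c2]
  ring

/-- Size bound for the quadratic form. -/
lemma aux_quad_bound {d : ℕ} (A : Fin d → Fin d → ℤ) (v : EuclideanSpace ℝ (Fin d)) :
    |∑ i, ∑ j, (A i j : ℝ) * v i * v j| ≤ (∑ i, ∑ j, |(A i j : ℝ)|) * (‖v‖ * ‖v‖) := by
  calc |∑ i, ∑ j, (A i j : ℝ) * v i * v j| ≤ ∑ i, |∑ j, (A i j : ℝ) * v i * v j| :=
        Finset.abs_sum_le_sum_abs _ _
    _ ≤ ∑ i, ∑ j, |(A i j : ℝ) * v i * v j| :=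
        Finset.sum_le_sum fun i _ => Finset.abs_sum_le_sum_abs _ _
    _ ≤ ∑ i, ∑ j, |(A i j : ℝ)| * (‖v‖ * ‖v‖) := by
        apply Finset.sum_le_sum; intro i _; apply Finset.sum_le_sum; intro j _
        rw [abs_mul, abs_mul, mul_assoc]
        apply mul_le_mul_of_nonneg_left _ (abs_nonneg _)
        exact mul_le_mul (aux_coord_le_norm v i) (aux_coord_le_norm v j) (abs_nonneg _)
          (norm_nonneg _)
    _ = (∑ i, ∑ j, |(A i j : ℝ)|) * (‖v‖ * ‖v‖) := by
        simp [Finset.sum_mul]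

/-- If the (affine) gradient vector vanishes at a point, the quadratic polynomial has
zero derivative there. -/
lemma aux_quad_fderiv_zero {d : ℕ} (A : Fin d → Fin d → ℤ) (B : Fin d → ℤ) (c : ℤ)
    (P : EuclideanSpace ℝ (Fin d) → ℝ)
    (hP : ∀ x, P x = ∑ i, ∑ j, (A i j : ℝ) * x i * x j + ∑ i, (B i : ℝ) * x i + (c : ℝ))
    (r : EuclideanSpace ℝ (Fin d))
    (hz : ∀ j, (∑ i, ((A i j : ℝ) + (A j i : ℝ)) * r i) + (B j : ℝ) = 0) :
    HasFDerivAt P (0 : EuclideanSpace ℝ (Fin d) →L[ℝ] ℝ) r := by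
  set CA := ∑ i, ∑ j, |(A i j : ℝ)| with hCAdef
  have hCA : 0 ≤ CA := by positivity
  rw [hasFDerivAt_iff_isLittleO_nhds_zero, Asymptotics.isLittleO_iff]
  intro ε hε
  have hball : Metric.closedBall (0 : EuclideanSpace ℝ (Fin d)) (ε / (CA + 1)) ∈ nhds (0 : EuclideanSpace ℝ (Fin d)) :=
    Metric.closedBall_mem_nhds _ (by positivity)
  filter_upwards [hball] with h hs
  have hPs : P (r + h) - P r - (0 : EuclideanSpace ℝ (Fin d) →L[ℝ] ℝ) h
      = ∑ i, ∑ j, (A i j : ℝ) * ((r + h) i - r i) * ((r + h) j - r j) := by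
    rw [aux_taylor_quad A B c P hP r (r + h)]
    simp only [ContinuousLinearMap.zero_apply, sub_zero]
    have : ∑ j, ((∑ i, ((A i j : ℝ) + (A j i : ℝ)) * r i) + (B j : ℝ)) * ((r + h) j - r j) = 0 := by
      apply Finset.sum_eq_zero; intro j _; rw [hz j, zero_mul]
    rw [this]; ring
  rw [Real.norm_eq_abs, hPs]
  have hco : ∀ i : Fin d, (r + h) i - r i = h i := by intro i; simp
  have h1 : |∑ i, ∑ j, (A i j : ℝ) * ((r + h) i - r i) * ((r + h) j - r j)| ≤ CA * (‖h‖ * ‖h‖) := by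
    have := aux_quad_bound A h
    calc |∑ i, ∑ j, (A i j : ℝ) * ((r + h) i - r i) * ((r + h) j - r j)|
        = |∑ i, ∑ j, (A i j : ℝ) * h i * h j| := by
          congr 1; apply Finset.sum_congr rfl; intro i _; apply Finset.sum_congr rfl; intro j _
          rw [hco i, hco j]
      _ ≤ CA * (‖h‖ * ‖h‖) := this
  have hsr : ‖h‖ ≤ ε / (CA + 1) := by
    rw [Metric.mem_closedBall, dist_zero_right] at hs; exact hs
  calc |∑ i, ∑ j, (A i j : ℝ) * ((r + h) i - r i) * ((r + h) j - r j)| ≤ CA * (‖h‖ * ‖h‖) := h1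
    _ = (CA * ‖h‖) * ‖h‖ := by ring
    _ ≤ ε * ‖h‖ := by
        apply mul_le_mul_of_nonneg_right _ (norm_nonneg _)
        calc CA * ‖h‖ ≤ CA * (ε / (CA + 1)) :=
              mul_le_mul_of_nonneg_left hsr hCA
          _ ≤ ε := by
              rw [div_eq_mul_inv, ← mul_assoc]
              rw [show CA * ε * (CA + 1)⁻¹ = ε * (CA * (CA + 1)⁻¹) by ring]
              nth_rewrite 2 [show ε = ε * 1 by ring]
              apply mul_le_mul_of_nonneg_left _ hε.le
              rw [← div_eq_mul_inv, div_le_one (by linarith)]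
              linarith

end Aux

set_option maxHeartbeats 2000000 in
/-- **Intrinsic simplex lemma** for quadratic hypersurfaces (codimension one).
Let `Z` be the zero set of an integral quadratic polynomial `P`, `K ⊆ Z_reg` a
compact subset of the smooth locus, and `Ψ : U → Z` a local parameterization with
`K ⊆ Ψ(V)` for a compact `V ⊆ U`. Then there is `κ > 0` such that for every ball
`B(x,ρ)`, all rational points `p/q ∈ ℚ^d ∩ K ∩ B(x,ρ)` with `q ≤ κ/ρ` lie in a
single affine hyperplane of `ℝ^d`. -/
theorem intrinsic_simplex_lemma (d : ℕ) (hd : 2 ≤ d)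
    (A : Fin d → Fin d → ℤ) (B : Fin d → ℤ) (c : ℤ) (hA : A ≠ 0)
    (P : EuclideanSpace ℝ (Fin d) → ℝ)
    (hP : ∀ x, P x = ∑ i, ∑ j, (A i j : ℝ) * x i * x j + ∑ i, (B i : ℝ) * x i + (c : ℝ))
    (Z Zreg : Set (EuclideanSpace ℝ (Fin d)))
    (hZ : Z = {x | P x = 0}) (hZreg : Zreg = {x ∈ Z | fderiv ℝ P x ≠ 0})
    (K : Set (EuclideanSpace ℝ (Fin d))) (hKcpt : IsCompact K) (hKreg : K ⊆ Zreg)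
    (U V : Set (EuclideanSpace ℝ (Fin (d - 1)))) (hU : IsOpen U)
    (hV : IsCompact V) (hVU : V ⊆ U)
    (Ψ : EuclideanSpace ℝ (Fin (d - 1)) → EuclideanSpace ℝ (Fin d))
    (hΨsmooth : ContDiffOn ℝ (⊤ : ℕ∞) Ψ U) (hΨinj : Set.InjOn Ψ U) (hΨZ : Ψ '' U ⊆ Z)
    (hΨimm : ∀ u ∈ U, ∃ D : EuclideanSpace ℝ (Fin (d - 1)) →L[ℝ] EuclideanSpace ℝ (Fin d),
      HasFDerivWithinAt Ψ D U u ∧ Function.Injective D)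
    (hKV : K ⊆ Ψ '' V) :
    ∃ κ > (0 : ℝ), ∀ (x : EuclideanSpace ℝ (Fin d)) (ρ : ℝ), 0 < ρ →
      ∃ (w : EuclideanSpace ℝ (Fin d)) (t : ℝ), w ≠ 0 ∧
        ∀ (p : Fin d → ℤ) (q : ℕ) (r : EuclideanSpace ℝ (Fin d)),
          (∀ i, r i = (p i : ℝ) / (q : ℝ)) → 0 < q → (q : ℝ) ≤ κ / ρ →
          r ∈ K ∩ closedBall x ρ → ⟪r, w⟫ = t := by
  classical
  have hd0 : 0 < d := by omega
  -- a default nonzero vector for trivial cases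
  set w₀ : EuclideanSpace ℝ (Fin d) := EuclideanSpace.single (⟨0, hd0⟩ : Fin d) (1 : ℝ) with hw₀
  have hw₀ne : w₀ ≠ 0 := by
    intro h0
    have h1 : w₀ (⟨0, hd0⟩ : Fin d) = 1 := by
      rw [hw₀, EuclideanSpace.single_apply, if_pos rfl]
    rw [h0] at h1
    norm_num at h1
  by_cases hKne : K.Nonempty
  swap
  · -- K is empty: everything is vacuous
    refine ⟨1, one_pos, fun x ρ hρ => ⟨w₀, 0, hw₀ne, fun p q r hr hq hqκ hrK => ?_⟩⟩
    rw [Set.not_nonempty_iff_eq_empty] at hKne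
    rw [hKne] at hrK
    simp at hrK
  -- the affine gradient
  set g : EuclideanSpace ℝ (Fin d) → Fin d → ℝ :=
    fun r j => (∑ i, ((A i j : ℝ) + (A j i : ℝ)) * r i) + (B j : ℝ) with hg
  have hP0 : ∀ r ∈ K, P r = 0 := by
    intro r hrK
    have h1 := hKreg hrK
    rw [hZreg] at h1
    have h2 := h1.1
    rw [hZ] at h2
    exact h2
  have hGne : ∀ r ∈ K, ∃ j, g r j ≠ 0 := by
    intro r hrK
    by_contra hcon
    push_neg at hcon
    have hder := aux_quad_fderiv_zero A B c P hP r hcon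
    have h1 := hKreg hrK
    rw [hZreg] at h1
    exact h1.2 hder.fderiv
  -- the squared norm of the gradient, and its minimum over K
  set f : EuclideanSpace ℝ (Fin d) → ℝ := fun r => ∑ j, (g r j)^2 with hfdef
  have hgc : ∀ j, Continuous (fun r : EuclideanSpace ℝ (Fin d) => g r j) := by
    intro j
    apply Continuous.add _ continuous_const
    apply continuous_finset_sum
    intro i _
    exact Continuous.mul continuous_const ((continuous_apply i).comp (PiLp.continuous_ofLp 2 _))
  have hfc : Continuous f := continuous_finset_sum _ (fun j _ => (hgc j).pow 2)
  obtain ⟨r₁, hr₁K, hmin'⟩ := hKcpt.exists_isMinOn hKne hfc.continuousOn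
  have hmin : ∀ y ∈ K, f r₁ ≤ f y := fun y hy => hmin' hy
  set δ2 : ℝ := f r₁ with hδ2def
  have hδ2 : 0 < δ2 := by
    obtain ⟨j, hj⟩ := hGne r₁ hr₁K
    apply Finset.sum_pos' (fun k _ => sq_nonneg _)
    exact ⟨j, Finset.mem_univ j, by positivity⟩
  set δ : ℝ := Real.sqrt δ2 with hδdef
  have hδ : 0 < δ := Real.sqrt_pos.mpr hδ2
  -- constants
  set CA : ℝ := ∑ i, ∑ j, |(A i j : ℝ)| with hCAdef
  have hCA0 : 0 ≤ CA := Finset.sum_nonneg fun i _ => Finset.sum_nonneg fun j _ => abs_nonneg _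
  set C2 : ℝ := 2 + 4 * CA / δ with hC2def
  have hC2 : 0 < C2 := by
    have h1 : 0 ≤ 4 * CA / δ := div_nonneg (by linarith) hδ.le
    rw [hC2def]; linarith
  set C1 : ℝ := d * d.factorial * (4 * CA / δ) * C2^(d-1) with hC1def
  have hC10 : 0 ≤ C1 := by
    rw [hC1def]
    apply mul_nonneg (mul_nonneg (mul_nonneg (by positivity) (by positivity)) _)
      (pow_nonneg hC2.le _)
    exact div_nonneg (by linarith) hδ.le
  set κ : ℝ := min 1 (1 / (C1 + 1)) with hκdef
  have hκ : 0 < κ := lt_min one_pos (one_div_pos.mpr (by linarith))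
  have hκ1 : κ ≤ 1 := min_le_left _ _
  clear_value δ2 δ CA C2 C1 κ
  refine ⟨κ, hκ, fun x ρ hρ => ?_⟩
  -- the set of admissible rational points
  set S : Set (EuclideanSpace ℝ (Fin d)) :=
    {y | (y ∈ K ∧ y ∈ closedBall x ρ) ∧
      ∃ (p : Fin d → ℤ) (q : ℕ), (∀ i, y i = (p i : ℝ) / (q : ℝ)) ∧ 0 < q ∧ (q : ℝ) ≤ κ / ρ}
    with hSdef
  by_cases hS : S.Nonempty
  swap
  · refine ⟨w₀, 0, hw₀ne, fun p q r hr hq hqκ hrK => ?_⟩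
    exact absurd ⟨r, ⟨hrK.1, hrK.2⟩, p, q, hr, hq, hqκ⟩ hS
  obtain ⟨r₀, hr₀S⟩ := hS
  obtain ⟨⟨hr₀K, hr₀B⟩, p₀, q₀, hp₀, hq₀, hq₀κ⟩ := hr₀S
  have hr₀S : r₀ ∈ S := ⟨⟨hr₀K, hr₀B⟩, p₀, q₀, hp₀, hq₀, hq₀κ⟩
  have hρκ : ρ ≤ κ := by
    have h1 : (1 : ℝ) ≤ (q₀ : ℝ) := by exact_mod_cast hq₀
    have h2 : (1 : ℝ) ≤ κ / ρ := h1.trans hq₀κ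
    rw [le_div_iff₀ hρ] at h2
    linarith
  have hρ1 : ρ ≤ 1 := hρκ.trans hκ1
  -- the normal direction at r₀
  set N : ℝ := ∑ j, (g r₀ j)^2 with hNdef
  have hN : δ2 ≤ N := hmin r₀ hr₀K
  have hNpos : 0 < N := hδ2.trans_le hN
  set u : Fin d → ℝ := fun j => g r₀ j / Real.sqrt N with hudef
  have hsqrtN : 0 < Real.sqrt N := Real.sqrt_pos.mpr hNpos
  have husq : ∑ j, u j ^ 2 = 1 := by
    simp only [hudef, div_pow, ← Finset.sum_div, Real.sq_sqrt hNpos.le]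
    rw [div_self hNpos.ne']
  have hu1 : ∀ j, |u j| ≤ 1 := by
    intro j
    rw [show |u j| = Real.sqrt ((u j)^2) by rw [Real.sqrt_sq_eq_abs]]
    rw [show (1:ℝ) = Real.sqrt 1 by rw [Real.sqrt_one]]
    apply Real.sqrt_le_sqrt
    rw [← husq]
    exact Finset.single_le_sum (f := fun k => (u k)^2) (fun k _ => sq_nonneg _) (Finset.mem_univ j)
  have hune : u ≠ 0 := by
    intro h0
    rw [h0] at husq
    simp at husq
  have hδN : δ ≤ Real.sqrt N := by rw [hδdef]; exact Real.sqrt_le_sqrt hN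
  -- the key determinant-vanishing claim
  have hdet0 : ∀ y : Fin d → EuclideanSpace ℝ (Fin d), (∀ i, y i ∈ S) →
      Matrix.det (Matrix.of fun i j => y i j - r₀ j) = 0 := by
    intro y hy
    choose p q hpq hqpos hqκ' using fun i => (hy i).2
    set v : Fin d → Fin d → ℝ := fun i j => y i j - r₀ j with hvdef
    set z : ℝ := Matrix.det (Matrix.of v) with hzdef
    -- Part A : integrality
    set Qp : ℝ := (q₀ : ℝ) * ∏ i, (q i : ℝ) with hQpdef
    have hQppos : 0 < Qp := by
      apply mul_pos (by exact_mod_cast hq₀)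
      apply Finset.prod_pos
      intro i _
      exact_mod_cast hqpos i
    have hIntegral : ∃ m : ℤ, z * Qp = (m : ℝ) := by
      have hexp : z = Matrix.det (Matrix.of fun i j => y i j)
          + ∑ i, (-1 : ℝ) * Matrix.det ((Matrix.of fun i j => y i j).updateRow i (fun j => r₀ j)) := by
        rw [hzdef]
        have hrw : (Matrix.of v) = Matrix.of fun i =>
            (fun j => y i j) + ((fun _ : Fin d => (-1:ℝ)) i) • (fun j => r₀ j) := by
          ext i j
          simp only [Matrix.of_apply, Pi.add_apply, Pi.smul_apply, smul_eq_mul, hvdef]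
          ring
        rw [hrw, aux_det_rank_one_expand (fun i j => y i j) (fun _ => (-1:ℝ)) (fun j => r₀ j)]
      set k0 : ℤ := (Matrix.of fun i j => p i j).det with hk0def
      set kk : Fin d → ℤ := fun i => ((Matrix.of fun i' j => p i' j).updateRow i p₀).det with hkkdef
      have hqR : ∀ i, ((q i : ℝ)) ≠ 0 := fun i => by exact_mod_cast (hqpos i).ne'
      have hq₀R : ((q₀ : ℝ)) ≠ 0 := by exact_mod_cast hq₀.ne'
      have hA1 : (∏ i, (q i : ℝ)) * Matrix.det (Matrix.of fun i j => y i j) = (k0 : ℝ) := by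
        rw [← Matrix.det_mul_column (fun i => (q i : ℝ)) (Matrix.of fun i j => y i j)]
        have h2 : (Matrix.of fun i j => (q i : ℝ) * (Matrix.of fun i' j' => y i' j') i j)
            = ((Int.castRingHom ℝ).mapMatrix (Matrix.of fun i j => p i j)) := by
          ext i j
          simp only [Matrix.of_apply, RingHom.mapMatrix_apply, Matrix.map_apply, Int.coe_castRingHom]
          rw [hpq i j, mul_div_cancel₀ _ (hqR i)]
        rw [h2, ← RingHom.map_det]
        rfl
      have hA2 : ∀ i₀ : Fin d, ((q₀:ℝ) * ∏ k ∈ Finset.univ.erase i₀, (q k : ℝ)) *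
          Matrix.det ((Matrix.of fun i j => y i j).updateRow i₀ (fun j => r₀ j)) = (kk i₀ : ℝ) := by
        intro i₀
        set wt : Fin d → ℝ := fun k => if k = i₀ then (q₀:ℝ) else (q k : ℝ) with hwtdef
        have hwt1 : wt i₀ = (q₀:ℝ) := by rw [hwtdef]; simp
        have hwt2 : ∀ k, k ≠ i₀ → wt k = (q k : ℝ) := by
          intro k hk; rw [hwtdef]; simp [if_neg hk]
        have hprod : ∏ k, wt k = (q₀:ℝ) * ∏ k ∈ Finset.univ.erase i₀, (q k : ℝ) := by
          rw [← Finset.mul_prod_erase Finset.univ wt (Finset.mem_univ i₀), hwt1]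
          congr 1
          apply Finset.prod_congr rfl
          intro k hk
          exact hwt2 k (Finset.mem_erase.mp hk).1
        rw [← hprod, ← Matrix.det_mul_column wt ((Matrix.of fun i j => y i j).updateRow i₀ (fun j => r₀ j))]
        have h2 : (Matrix.of fun k j => wt k * ((Matrix.of fun i' j' => y i' j').updateRow i₀ (fun j' => r₀ j')) k j)
            = ((Int.castRingHom ℝ).mapMatrix ((Matrix.of fun i j => p i j).updateRow i₀ p₀)) := by
          ext k j
          simp only [Matrix.of_apply, RingHom.mapMatrix_apply, Matrix.map_apply, Int.coe_castRingHom]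
          rcases eq_or_ne k i₀ with rfl | hk
          · rw [Matrix.updateRow_self, Matrix.updateRow_self, hwt1]
            rw [hp₀ j, mul_div_cancel₀ _ hq₀R]
          · rw [Matrix.updateRow_ne hk, Matrix.updateRow_ne hk, hwt2 k hk]
            simp only [Matrix.of_apply]
            rw [hpq k j, mul_div_cancel₀ _ (hqR k)]
        rw [h2, ← RingHom.map_det]
        rfl
      refine ⟨(q₀:ℤ) * k0 - ∑ i, (q i : ℤ) * kk i, ?_⟩
      have e0 : Matrix.det (Matrix.of fun i j => y i j) * Qp = (q₀:ℝ) * (k0:ℝ) := by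
        rw [hQpdef, ← hA1]; ring
      have ei : ∀ i : Fin d, Matrix.det ((Matrix.of fun i' j => y i' j).updateRow i (fun j => r₀ j)) * Qp
          = (q i : ℝ) * (kk i : ℝ) := by
        intro i
        rw [hQpdef, ← hA2 i,
          show (∏ k, (q k:ℝ)) = (q i:ℝ) * ∏ k ∈ Finset.univ.erase i, (q k:ℝ) from
            (Finset.mul_prod_erase _ _ (Finset.mem_univ i)).symm]
        ring
      rw [hexp, add_mul, Finset.sum_mul, e0]
      have : ∑ i, (-1:ℝ) * Matrix.det ((Matrix.of fun i' j => y i' j).updateRow i (fun j => r₀ j)) * Qp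
          = - ∑ i, (q i : ℝ) * (kk i : ℝ) := by
        rw [← Finset.sum_neg_distrib]
        apply Finset.sum_congr rfl
        intro i _
        rw [show (-1:ℝ) * Matrix.det ((Matrix.of fun i' j => y i' j).updateRow i (fun j => r₀ j)) * Qp
          = -(Matrix.det ((Matrix.of fun i' j => y i' j).updateRow i (fun j => r₀ j)) * Qp) by ring, ei i]
      rw [this]
      push_cast
      ring
    -- Part B : geometric bound
    have hGeom : |z| ≤ C1 * ρ^(d+1) := by
      have hball2 : ∀ i, ‖(y i - r₀ : EuclideanSpace ℝ (Fin d))‖ ≤ 2 * ρ := by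
        intro i
        have h1 : dist (y i) x ≤ ρ := mem_closedBall.mp (hy i).1.2
        have h2 : dist r₀ x ≤ ρ := mem_closedBall.mp hr₀B
        calc ‖(y i - r₀ : EuclideanSpace ℝ (Fin d))‖ = dist (y i) r₀ := (dist_eq_norm _ _).symm
          _ ≤ dist (y i) x + dist x r₀ := dist_triangle _ _ _
          _ ≤ ρ + ρ := by rw [dist_comm x r₀]; exact add_le_add h1 h2
          _ = 2 * ρ := by ring
      have hvcoord : ∀ i j, (y i - r₀ : EuclideanSpace ℝ (Fin d)) j = v i j := by
        intro i j; simp [hvdef]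
      have hvle : ∀ i j, |v i j| ≤ 2 * ρ := by
        intro i j
        have h1 := aux_coord_le_norm (y i - r₀) j
        rw [hvcoord i j] at h1
        exact h1.trans (hball2 i)
      -- the quadratic-surface identity
      have hQid : ∀ i, ∑ j, g r₀ j * v i j = - ∑ a, ∑ b, (A a b : ℝ) * v i a * v i b := by
        intro i
        have ht := aux_taylor_quad A B c P hP r₀ (y i)
        rw [hP0 _ (hy i).1.1, hP0 _ hr₀K] at ht
        have h2 : ∑ j, g r₀ j * (y i j - r₀ j)
            = ∑ j, ((∑ a, ((A a j : ℝ) + (A j a : ℝ)) * r₀ a) + (B j : ℝ)) * (y i j - r₀ j) := rfl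
        have h3 : ∀ a b : Fin d, v i a = y i a - r₀ a := fun a b => rfl
        linarith [ht]
      have hQbnd : ∀ i, |∑ j, g r₀ j * v i j| ≤ 4 * CA * ρ^2 := by
        intro i
        rw [hQid i, abs_neg]
        have h1 := aux_quad_bound A (y i - r₀)
        have h2 : ∑ a, ∑ b, (A a b : ℝ) * (y i - r₀ : EuclideanSpace ℝ (Fin d)) a *
            (y i - r₀ : EuclideanSpace ℝ (Fin d)) b = ∑ a, ∑ b, (A a b : ℝ) * v i a * v i b := by
          apply Finset.sum_congr rfl; intro a _; apply Finset.sum_congr rfl; intro b _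
          rw [hvcoord i a, hvcoord i b]
        rw [h2] at h1
        refine h1.trans ?_
        rw [← hCAdef]
        calc CA * (‖(y i - r₀ : EuclideanSpace ℝ (Fin d))‖ * ‖(y i - r₀ : EuclideanSpace ℝ (Fin d))‖)
            ≤ CA * ((2*ρ) * (2*ρ)) := by
              apply mul_le_mul_of_nonneg_left _ hCA0
              exact mul_le_mul (hball2 i) (hball2 i) (norm_nonneg _) (by linarith)
          _ = 4 * CA * ρ^2 := by ring
      -- tangential decomposition
      set sv : Fin d → ℝ := fun i => ∑ j, v i j * u j with hsvdef
      have hu_j : ∀ j, u j = g r₀ j / Real.sqrt N := fun j => rfl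
      have hsv : ∀ i, sv i = (∑ j, g r₀ j * v i j) / Real.sqrt N := by
        intro i
        rw [show sv i = ∑ j, v i j * u j from rfl, Finset.sum_div]
        apply Finset.sum_congr rfl
        intro j _
        rw [hu_j j]
        ring
      have hsvbnd : ∀ i, |sv i| ≤ 4 * CA / δ * ρ^2 := by
        intro i
        rw [hsv i, abs_div, abs_of_pos hsqrtN]
        have h1 : |∑ j, g r₀ j * v i j| / Real.sqrt N ≤ (4 * CA * ρ^2) / δ :=
          div_le_div₀ (mul_nonneg (by linarith) (sq_nonneg ρ)) (hQbnd i) hδ hδN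
        refine h1.trans_eq ?_
        ring
      set tt : Fin d → Fin d → ℝ := fun i j => v i j - sv i * u j with httdef
      have hrow : (Matrix.of v) = Matrix.of fun i => tt i + sv i • u := by
        ext i j
        simp only [Matrix.of_apply, Pi.add_apply, Pi.smul_apply, smul_eq_mul, httdef]
        ring
      have hexp2 : z = Matrix.det (Matrix.of tt)
          + ∑ i, sv i * Matrix.det ((Matrix.of tt).updateRow i u) := by
        rw [hzdef, hrow, aux_det_rank_one_expand]
      have hdetT : Matrix.det (Matrix.of tt) = 0 := by
        rw [← Matrix.exists_mulVec_eq_zero_iff]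
        refine ⟨u, hune, ?_⟩
        funext i
        simp only [Matrix.mulVec, dotProduct, Matrix.of_apply]
        have h1 : ∑ j, tt i j * u j = (∑ j, v i j * u j) - sv i * ∑ j, u j ^ 2 := by
          rw [Finset.mul_sum, ← Finset.sum_sub_distrib]
          apply Finset.sum_congr rfl
          intro j _
          rw [httdef]
          ring
        have h2 : ∑ j, tt i j * u j = 0 := by
          rw [h1, husq, show (∑ j, v i j * u j) = sv i from rfl]
          ring
        exact h2.trans rfl
      have hrho2 : 4 * CA / δ * ρ^2 ≤ 4 * CA / δ * ρ := by
        have h1 : ρ^2 ≤ ρ := by nlinarith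
        exact mul_le_mul_of_nonneg_left h1 (div_nonneg (by linarith) hδ.le)
      have hupdbnd : ∀ i, |Matrix.det ((Matrix.of tt).updateRow i u)|
          ≤ (d.factorial : ℝ) * (C2 * ρ)^(d-1) := by
        intro i
        have hb := aux_abs_det_le ((Matrix.of tt).updateRow i u)
          (Function.update (fun _ : Fin d => C2 * ρ) i 1) ?_
        · refine hb.trans_eq ?_
          congr 1
          rw [← Finset.mul_prod_erase Finset.univ _ (Finset.mem_univ i), Function.update_self]
          rw [one_mul]
          rw [show ∏ k ∈ Finset.univ.erase i, (Function.update (fun _ : Fin d => C2 * ρ) i 1) k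
              = ∏ _k ∈ Finset.univ.erase i, (C2 * ρ) from
            Finset.prod_congr rfl
              (fun k hk => Function.update_of_ne (Finset.mem_erase.mp hk).1 _ _)]
          rw [Finset.prod_const, Finset.card_erase_of_mem (Finset.mem_univ i),
            Finset.card_univ, Fintype.card_fin]
        · intro k j
          rcases eq_or_ne k i with rfl | hk
          · rw [Matrix.updateRow_self, Function.update_self]
            exact hu1 j
          · rw [Matrix.updateRow_ne hk, Function.update_of_ne hk]
            simp only [Matrix.of_apply, httdef]
            calc |v k j - sv k * u j| ≤ |v k j| + |sv k * u j| := abs_sub _ _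
              _ ≤ 2 * ρ + 4 * CA / δ * ρ * 1 := by
                  apply add_le_add (hvle k j)
                  rw [abs_mul]
                  apply mul_le_mul ((hsvbnd k).trans hrho2) (hu1 j) (abs_nonneg _)
                  exact mul_nonneg (div_nonneg (by linarith) hδ.le) hρ.le
              _ = C2 * ρ := by rw [hC2def]; ring
      calc |z| = |∑ i, sv i * Matrix.det ((Matrix.of tt).updateRow i u)| := by
            rw [hexp2, hdetT, zero_add]
        _ ≤ ∑ i, |sv i * Matrix.det ((Matrix.of tt).updateRow i u)| :=
            Finset.abs_sum_le_sum_abs _ _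
        _ ≤ ∑ _i : Fin d, (4 * CA / δ * ρ^2) * ((d.factorial : ℝ) * (C2 * ρ)^(d-1)) := by
            apply Finset.sum_le_sum
            intro i _
            rw [abs_mul]
            apply mul_le_mul (hsvbnd i) (hupdbnd i) (abs_nonneg _)
            exact mul_nonneg (div_nonneg (by linarith) hδ.le) (sq_nonneg ρ)
        _ = C1 * ρ^(d+1) := by
            rw [Finset.sum_const, Finset.card_univ, Fintype.card_fin, nsmul_eq_mul]
            rw [hC1def, mul_pow]
            rw [show ρ^(d+1) = ρ^2 * ρ^(d-1) by rw [← pow_add]; congr 1; omega]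
            ring
    -- Part C : combine
    obtain ⟨m, hm⟩ := hIntegral
    have hQple : Qp ≤ (κ / ρ)^(d+1) := by
      have h1 : ∏ i, (q i : ℝ) ≤ (κ/ρ)^d := by
        calc ∏ i, (q i : ℝ) ≤ ∏ _i : Fin d, (κ/ρ) :=
              Finset.prod_le_prod (fun i _ => by positivity) (fun i _ => hqκ' i)
          _ = (κ/ρ)^d := by rw [Finset.prod_const, Finset.card_univ, Fintype.card_fin]
      calc Qp ≤ (κ/ρ) * (κ/ρ)^d := by
            apply mul_le_mul hq₀κ h1 (Finset.prod_nonneg fun i _ => by positivity)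
            exact div_nonneg hκ.le hρ.le
        _ = (κ/ρ)^(d+1) := by rw [pow_succ]; ring
    have habs : |(m : ℝ)| < 1 := by
      rw [← hm, abs_mul, abs_of_pos hQppos]
      calc |z| * Qp ≤ (C1 * ρ^(d+1)) * (κ/ρ)^(d+1) :=
            mul_le_mul hGeom hQple hQppos.le
              (mul_nonneg hC10 (pow_nonneg hρ.le _))
        _ = C1 * κ^(d+1) := by
            rw [mul_assoc, ← mul_pow]
            congr 2
            field_simp
        _ ≤ C1 * κ := by
            apply mul_le_mul_of_nonneg_left _ hC10
            calc κ^(d+1) ≤ κ^1 := pow_le_pow_of_le_one hκ.le hκ1 (by omega)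
              _ = κ := pow_one κ
        _ ≤ C1 * (1 / (C1 + 1)) := by
            rw [hκdef]
            exact mul_le_mul_of_nonneg_left (min_le_right _ _) hC10
        _ < 1 := by
            rw [mul_one_div, div_lt_one (by linarith)]
            linarith
    have hm0 : m = 0 := by
      have h2 : |m| < 1 := by exact_mod_cast (by rwa [← Int.cast_abs] at habs : ((|m| : ℤ) : ℝ) < 1)
      rwa [Int.abs_lt_one_iff] at h2
    rw [hm0] at hm
    simp only [Int.cast_zero] at hm
    rcases mul_eq_zero.mp hm with h | h
    · exact h
    · exact absurd h hQppos.ne'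
  -- From vanishing determinants to a hyperplane
  set W : Submodule ℝ (EuclideanSpace ℝ (Fin d)) :=
    Submodule.span ℝ ((fun y => y - r₀) '' S) with hWdef
  have hWne : W ≠ ⊤ := by
    intro hWtop
    obtain ⟨b, hbsub, hbspan, hbind⟩ := exists_linearIndependent ℝ ((fun y => y - r₀) '' S)
    rw [← hWdef, hWtop] at hbspan
    haveI : Fintype b := (hbind.setFinite).fintype
    have hbbasis : Fintype.card b = d := by
      have hb : Module.finrank ℝ (EuclideanSpace ℝ (Fin d)) = Fintype.card b := by
        apply Module.finrank_eq_card_basis (Module.Basis.mk hbind (by rw [Subtype.range_coe, hbspan]))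
      rw [finrank_euclideanSpace_fin] at hb
      omega
    set e : Fin d ≃ b := (Fintype.equivFinOfCardEq hbbasis).symm with hedef
    have hmem : ∀ i : Fin d, ∃ yy, yy ∈ S ∧ yy - r₀ = ((e i : b) : EuclideanSpace ℝ (Fin d)) := by
      intro i
      have h1 : ((e i : b) : EuclideanSpace ℝ (Fin d)) ∈ (fun y => y - r₀) '' S := hbsub (e i).2
      obtain ⟨yy, hyy, hyy2⟩ := h1
      exact ⟨yy, hyy, hyy2⟩
    choose y hyS hyv using hmem
    have hdet := hdet0 y hyS
    obtain ⟨cv, hcv0, hcvM⟩ := Matrix.exists_vecMul_eq_zero_iff.mpr hdet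
    have hind : LinearIndependent ℝ (fun i : Fin d => y i - r₀) := by
      have h1 : LinearIndependent ℝ (fun i : Fin d => ((e i : b) : EuclideanSpace ℝ (Fin d))) :=
        hbind.comp e e.injective
      convert h1 using 1
      funext i
      rw [hyv i]
    have hsum : ∑ i, cv i • (y i - r₀) = 0 := by
      ext j
      have h1 := congrFun hcvM j
      simp only [Matrix.vecMul, dotProduct, Matrix.of_apply] at h1
      rw [show ((0 : EuclideanSpace ℝ (Fin d)) j) = 0 from rfl]
      rw [show ((∑ i, cv i • (y i - r₀)) j) = ∑ i, cv i * (y i j - r₀ j) by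
        rw [WithLp.ofLp_sum, Finset.sum_apply]
        apply Finset.sum_congr rfl
        intro i _
        simp [Pi.smul_apply]]
      simpa using h1
    have := Fintype.linearIndependent_iff.mp hind cv hsum
    exact hcv0 (funext fun i => this i)
  have hWorth : ∃ w : EuclideanSpace ℝ (Fin d), w ∈ Wᗮ ∧ w ≠ 0 := by
    by_contra hcon
    push_neg at hcon
    have : Wᗮ = ⊥ := by
      rw [Submodule.eq_bot_iff]
      intro w hw
      by_contra hw0
      exact hw0 (hcon w hw)
    rw [Submodule.orthogonal_eq_bot_iff] at this
    exact hWne this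
  obtain ⟨w, hwW, hwne⟩ := hWorth
  refine ⟨w, ⟪r₀, w⟫, hwne, fun p q r hr hq hqκ hrK => ?_⟩
  have hrS : r ∈ S := ⟨⟨hrK.1, hrK.2⟩, p, q, hr, hq, hqκ⟩
  have hrW : r - r₀ ∈ W := Submodule.subset_span ⟨r, hrS, rfl⟩
  have h0 : ⟪r - r₀, w⟫ = 0 := (Submodule.mem_orthogonal W w).mp hwW _ hrW
  rw [inner_sub_left] at h0
  linarith
end
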